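/- Start with 2n values in {−1,1}: in the first scenario exactly n+1 are +1 and n−1 are −1, in the second exactly n are +1 and n are −1. Flip each independently with probability η < 1/2; let p₁ and p₀ respectively be the probabilities that the resulting sums are 0. Then p₀ − p₁ ≥ (2η−1)²·c₀/n^{3/2} for some absolute constant c₀ > 0. -/

import Mathlib

open Finset

/-- Binomial probability: probability of exactly k successes in m independent
trials with success probability η. -/
noncomputable def binomProb (m : ℕ) (η : ℝ) (k : ℕ) : ℝ :=
  (m.choose k : ℝ) * η ^ k * (1 - η) ^ (m - k)

/-- `pSum n d η` is the probability that the sum of 2n ±1-values, starting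
with n+d values +1 and n−d values −1, becomes 0 after each value is flipped
independently with probability η. -/
noncomputable def pSum (n d : ℕ) (η : ℝ) : ℝ :=
  ∑ j ∈ Finset.range (n + d + 1), ∑ k ∈ Finset.range (n - d + 1),
    if j = k + d then binomProb (n + d) η j * binomProb (n - d) η k else 0

/-! With `f = flipGF η` and `g = flipGF (1 - η) = η + (1 - η) X` the generating polynomials of
the number of flips of a `+1` and of a `-1`, `pSum n d η` is the coefficient of `X ^ n` in
`f ^ (n + d) * g ^ (n - d)`. For `n = m + 1` the gap `p₀ - p₁` is therefore the coefficient of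
`X ^ (m + 1)` in `(f g) ^ m * f * (g - f)`, where `g - f = (2η - 1)(1 - X)` and
`f g = η(1 - η)(1 + X)² + (1 - 2η)² X`. Expanding `(f g) ^ m` binomially turns the gap into
`(2η - 1)²` times an average of `catalan k / 4 ^ k` against the binomial weights
`C(m, k) (4η(1 - η)) ^ k ((1 - 2η)²) ^ (m - k)`, and `catalan k ≥ 4 ^ k / (2 n ^ (3/2))` for
`k < n` because `C(2k, k)² ≥ 16 ^ k / (4k + 1)`. -/

open Polynomial

theorem Polynomial.coeff_C_add_C_mul_X_pow {R : Type*} [CommSemiring R] (a b : R) (m j : ℕ) :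
    ((C a + C b * X) ^ m).coeff j = m.choose j * b ^ j * a ^ (m - j) := by
  rw [add_comm, add_pow, finsetSum_coeff, Finset.sum_eq_single j]
  · simp only [mul_pow, ← C_pow, ← C_eq_natCast, coeff_mul_C, coeff_C_mul, coeff_X_pow, if_pos]
    ring
  · intro i _ hij
    simp only [mul_pow, ← C_pow, ← C_eq_natCast, coeff_mul_C, coeff_C_mul, coeff_X_pow,
      if_neg (Ne.symm hij)]
    ring
  · intro hj
    simp [Nat.choose_eq_zero_of_lt (by simpa using hj : m < j)]

noncomputable def flipGF (η : ℝ) : ℝ[X] := C (1 - η) + C η * X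

theorem coeff_flipGF_pow (m j : ℕ) (η : ℝ) : (flipGF η ^ m).coeff j = binomProb m η j := by
  rw [flipGF, coeff_C_add_C_mul_X_pow, binomProb]

theorem binomProb_eq_zero_of_lt {m k : ℕ} (h : m < k) (η : ℝ) : binomProb m η k = 0 := by
  simp [binomProb, Nat.choose_eq_zero_of_lt h]

theorem binomProb_one_sub {m k : ℕ} (h : k ≤ m) (η : ℝ) :
    binomProb m (1 - η) k = binomProb m η (m - k) := by
  rw [binomProb, binomProb, Nat.choose_symm h, Nat.sub_sub_self h, sub_sub_cancel]
  ring

theorem pSum_eq_coeff {n d : ℕ} (hd : d ≤ n) (η : ℝ) :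
    pSum n d η = (flipGF η ^ (n + d) * flipGF (1 - η) ^ (n - d)).coeff n := by
  have hsplit : n + 1 = d + (n - d + 1) := by omega
  rw [coeff_mul, Finset.Nat.sum_antidiagonal_eq_sum_range_succ_mk, Nat.succ_eq_add_one, hsplit,
    Finset.sum_range_add, Finset.sum_eq_zero, zero_add, pSum, Finset.sum_comm]
  · refine Finset.sum_congr rfl fun k hk => ?_
    have hk : k ≤ n - d := by simpa [Nat.lt_succ_iff] using hk
    rw [Finset.sum_ite_eq', if_pos (by simp; omega), coeff_flipGF_pow, coeff_flipGF_pow,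
      binomProb_one_sub (by omega), add_comm k d, show n - d - (n - (d + k)) = k by omega]
  · intro i hi
    rw [mem_range] at hi
    rw [coeff_flipGF_pow _ (n - i), binomProb_eq_zero_of_lt (by omega), mul_zero]

theorem Nat.choose_succ_add_catalan (k : ℕ) :
    (2 * k).choose (k + 1) + catalan k = centralBinom k := by
  apply Nat.eq_of_mul_eq_mul_left k.succ_pos
  have h := Nat.choose_succ_right_eq (2 * k) k
  rw [show 2 * k - k = k by omega] at h
  rw [mul_add, succ_mul_catalan_eq_centralBinom, centralBinom_eq_two_mul_choose]
  linarith

theorem Polynomial.coeff_one_add_X_pow_mul_one_sub_X_mul {R : Type*} [CommRing R] (a b : R)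
    (k : ℕ) :
    ((1 + X) ^ (2 * k) * (1 - X) * (C a + C b * X)).coeff (k + 1) = (b - a) * catalan k := by
  have hX2 :
      ((X : R[X]) ^ 2 * (1 + X) ^ (2 * k)).coeff (k + 1) = ((2 * k).choose (k + 1) : R) := by
    cases k with
    | zero => simp
    | succ j =>
      rw [coeff_X_pow_mul', if_pos (by omega), coeff_one_add_X_pow,
        Nat.choose_symm_of_eq_add (by omega : 2 * (j + 1) = (j + 1 + 1 - 2) + (j + 1 + 1))]
  have hcentral : ((2 * k).choose k : R) = (2 * k).choose (k + 1) + catalan k := by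
    rw [← Nat.centralBinom_eq_two_mul_choose, ← Nat.choose_succ_add_catalan, Nat.cast_add]
  have hexpand : (1 + X) ^ (2 * k) * (1 - X) * (C a + C b * X) = C a * (1 + X) ^ (2 * k)
      + C (b - a) * (X * (1 + X) ^ (2 * k)) - C b * (X ^ 2 * (1 + X) ^ (2 * k)) := by
    rw [C_sub]; ring
  rw [hexpand, coeff_sub, coeff_add, coeff_C_mul, coeff_C_mul, coeff_C_mul, coeff_X_mul,
    coeff_one_add_X_pow, coeff_one_add_X_pow, hX2, hcentral]
  ring

theorem flipGF_mul_flipGF_one_sub (η : ℝ) :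
    flipGF η * flipGF (1 - η) = C (η * (1 - η)) * (1 + X) ^ 2 + C ((1 - 2 * η) ^ 2) * X := by
  simp only [flipGF, C_mul, C_sub, C_pow, C_1, C_ofNat]
  ring

theorem flipGF_one_sub_sub_flipGF (η : ℝ) :
    flipGF (1 - η) - flipGF η = C (2 * η - 1) * (1 - X) := by
  simp only [flipGF, C_mul, C_sub, C_1, C_ofNat]
  ring

theorem pSum_sub_pSum_eq (m : ℕ) (η : ℝ) :
    pSum (m + 1) 0 η - pSum (m + 1) 1 η = (2 * η - 1) ^ 2 * ∑ k ∈ range (m + 1),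
      m.choose k * (η * (1 - η)) ^ k * ((1 - 2 * η) ^ 2) ^ (m - k) * catalan k := by
  have hfactor :
      flipGF η ^ (m + 1) * flipGF (1 - η) ^ (m + 1) - flipGF η ^ (m + 2) * flipGF (1 - η) ^ m
      = (flipGF η * flipGF (1 - η)) ^ m * (C (2 * η - 1) * (1 - X) * flipGF η) := by
    rw [← flipGF_one_sub_sub_flipGF]; ring
  rw [pSum_eq_coeff (by omega), pSum_eq_coeff (by omega), ← coeff_sub, Nat.add_sub_cancel,
    Nat.sub_zero, add_zero, hfactor, flipGF_mul_flipGF_one_sub, add_pow, Finset.sum_mul,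
    finsetSum_coeff, Finset.mul_sum]
  refine Finset.sum_congr rfl fun k hk => ?_
  have hk : k ≤ m := by simpa [Nat.lt_succ_iff] using hk
  have hterm : (C (η * (1 - η)) * (1 + X) ^ 2) ^ k * (C ((1 - 2 * η) ^ 2) * X) ^ (m - k)
        * (m.choose k : ℝ[X]) * (C (2 * η - 1) * (1 - X) * flipGF η)
      = C (m.choose k * (η * (1 - η)) ^ k * ((1 - 2 * η) ^ 2) ^ (m - k) * (2 * η - 1))
        * ((1 + X) ^ (2 * k) * (1 - X) * flipGF η * X ^ (m - k)) := by
    simp only [C_mul, C_pow, ← C_eq_natCast, pow_mul, mul_pow]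
    ring
  rw [hterm, coeff_C_mul, show m + 1 = k + 1 + (m - k) by omega, coeff_mul_X_pow, flipGF,
    coeff_one_add_X_pow_mul_one_sub_X_mul]
  ring

theorem Nat.sixteen_pow_le_mul_centralBinom_sq (k : ℕ) :
    16 ^ k ≤ (4 * k + 1) * centralBinom k ^ 2 := by
  induction k with
  | zero => simp
  | succ k ih =>
    refine Nat.le_of_mul_le_mul_left ?_ (pow_pos k.succ_pos 2)
    calc (k + 1) ^ 2 * 16 ^ (k + 1) = 16 * (k + 1) ^ 2 * 16 ^ k := by ring
      _ ≤ 16 * (k + 1) ^ 2 * ((4 * k + 1) * centralBinom k ^ 2) := by gcongr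
      _ ≤ (4 * (k + 1) + 1) * (2 * (2 * k + 1) * centralBinom k) ^ 2 := by
        nlinarith [sq_nonneg (centralBinom k)]
      _ = (k + 1) ^ 2 * ((4 * (k + 1) + 1) * centralBinom (k + 1) ^ 2) := by
        rw [← succ_mul_centralBinom_succ]; ring

theorem Nat.sixteen_pow_le_mul_pow_three_mul_catalan_sq {k n : ℕ} (hk : k < n) :
    16 ^ k ≤ 4 * n ^ 3 * catalan k ^ 2 :=
  calc 16 ^ k ≤ (4 * k + 1) * centralBinom k ^ 2 := sixteen_pow_le_mul_centralBinom_sq k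
    _ = (4 * k + 1) * (k + 1) ^ 2 * catalan k ^ 2 := by
      rw [← succ_mul_catalan_eq_centralBinom]; ring
    _ ≤ 4 * n * n ^ 2 * catalan k ^ 2 := by gcongr <;> omega
    _ = 4 * n ^ 3 * catalan k ^ 2 := by ring

theorem four_pow_le_mul_rpow_mul_catalan {k n : ℕ} (hk : k < n) :
    (4 : ℝ) ^ k ≤ 2 * (n : ℝ) ^ ((3 : ℝ) / 2) * catalan k := by
  rw [← pow_le_pow_iff_left₀ (by positivity) (by positivity) two_ne_zero]
  calc ((4 : ℝ) ^ k) ^ 2 = ((16 ^ k : ℕ) : ℝ) := by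
        rw [← pow_mul, mul_comm, pow_mul]; norm_num
    _ ≤ ((4 * n ^ 3 * catalan k ^ 2 : ℕ) : ℝ) :=
      Nat.cast_le.mpr (Nat.sixteen_pow_le_mul_pow_three_mul_catalan_sq hk)
    _ = (2 * (n : ℝ) ^ ((3 : ℝ) / 2) * catalan k) ^ 2 := by
      rw [mul_pow, mul_pow, ← Real.rpow_mul_natCast (by positivity)]
      push_cast
      norm_num

theorem one_div_le_sum_choose_mul_catalan (m : ℕ) {η : ℝ} (hη0 : 0 ≤ η) (hη1 : η ≤ 1) :
    1 / (2 * ((m + 1 : ℕ) : ℝ) ^ ((3 : ℝ) / 2)) ≤ ∑ k ∈ range (m + 1),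
      m.choose k * (η * (1 - η)) ^ k * ((1 - 2 * η) ^ 2) ^ (m - k) * catalan k := by
  set D := 2 * ((m + 1 : ℕ) : ℝ) ^ ((3 : ℝ) / 2)
  have hD : 0 < D := by positivity
  calc 1 / D = (4 * (η * (1 - η)) + (1 - 2 * η) ^ 2) ^ m / D := by
        rw [show 4 * (η * (1 - η)) + (1 - 2 * η) ^ 2 = 1 by ring, one_pow]
    _ = ∑ k ∈ range (m + 1),
          m.choose k * (η * (1 - η)) ^ k * ((1 - 2 * η) ^ 2) ^ (m - k) * (4 ^ k / D) := by
        rw [add_pow, Finset.sum_div]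
        refine Finset.sum_congr rfl fun k _ => ?_
        rw [mul_pow]; ring
    _ ≤ _ := by
        refine Finset.sum_le_sum fun k hk => mul_le_mul_of_nonneg_left ?_ (by positivity)
        rw [div_le_iff₀ hD, mul_comm]
        exact four_pow_le_mul_rpow_mul_catalan (by simpa using hk)

theorem pSum_gap :
    ∃ c₀ : ℝ, 0 < c₀ ∧ ∀ n : ℕ, 1 ≤ n → ∀ η : ℝ, 0 ≤ η → η < 1 / 2 →
      (2 * η - 1) ^ 2 * c₀ / (n : ℝ) ^ ((3 : ℝ) / 2) ≤
        pSum n 0 η - pSum n 1 η := by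
  refine ⟨1 / 2, by norm_num, fun n hn η hη0 hη => ?_⟩
  obtain ⟨m, rfl⟩ : ∃ m, n = m + 1 := ⟨n - 1, by omega⟩
  rw [pSum_sub_pSum_eq]
  calc (2 * η - 1) ^ 2 * (1 / 2) / ((m + 1 : ℕ) : ℝ) ^ ((3 : ℝ) / 2)
      = (2 * η - 1) ^ 2 * (1 / (2 * ((m + 1 : ℕ) : ℝ) ^ ((3 : ℝ) / 2))) := by ring
    _ ≤ _ := by
      gcongr
      exact one_div_le_sum_choose_mul_catalan m hη0 (by linarith)
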